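/- arXiv:2510.08861 — 2 statements merged into one kernel-verified Lean document; each statement's English description precedes it below -/
import Mathlib

section
/- For every profunctor K from a category C to a category D, the category of instances of K is equivalent to the category of discrete opfibrations over K. -/
open CategoryTheory Opposite

universe u

/-- A functor `p : E ⥤ B` is a discrete opfibration if every morphism out of the image of an
object `e` has a unique lift with domain `e`. -/
def IsDiscreteOpfib {E : Type*} {B : Type*} [Category E] [Category B] (p : E ⥤ B) : Prop :=
  ∀ ⦃e : E⦄ ⦃b : B⦄ (f : p.obj e ⟶ b),
    ∃! eg : Σ e' : E, e ⟶ e',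
      ∃ h : p.obj eg.1 = b, p.map eg.2 ≫ eqToHom h = f

variable {C D : Type u} [Category.{u} C] [Category.{u} D]

/-- An instance of a profunctor `K` from `C` to `D`: copresheaves `X` on `C` and `Y` on `D`
together with an action `X.obj c → K(c,d) → Y.obj d` compatible with the actions of `C` and
`D` on `K`. -/
structure ProfInstance (K : Cᵒᵖ × D ⥤ Type u) where
  X : C ⥤ Type u
  Y : D ⥤ Type u
  act : ∀ {c : C} {d : D}, X.obj c → K.obj (op c, d) → Y.obj d
  act_map : ∀ {c : C} {d d' : D} (g : d ⟶ d') (x : X.obj c) (k : K.obj (op c, d)),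
    Y.map g (act x k) = act x (K.map (𝟙 (op c), g) k)
  map_act : ∀ {c c' : C} {d : D} (f : c ⟶ c') (x : X.obj c) (k : K.obj (op c', d)),
    act (X.map f x) k = act x (K.map (f.op, 𝟙 d) k)

/-- The category of instances of a profunctor `K`. -/
instance (K : Cᵒᵖ × D ⥤ Type u) : Category (ProfInstance K) where
  Hom I J := { μν : (I.X ⟶ J.X) × (I.Y ⟶ J.Y) //
      ∀ {c : C} {d : D} (x : I.X.obj c) (k : K.obj (op c, d)),
        μν.2.app d (I.act x k) = J.act (μν.1.app c x) k }
  id I := ⟨(𝟙 I.X, 𝟙 I.Y), fun _ _ => rfl⟩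
  comp {I J L} f g := ⟨(f.1.1 ≫ g.1.1, f.1.2 ≫ g.1.2), fun {c} {d} x k => by
    show g.1.2.app d (f.1.2.app d (I.act x k)) = L.act (g.1.1.app c (f.1.1.app c x)) k
    rw [f.2, g.2]⟩
  id_comp f := rfl
  comp_id f := rfl
  assoc f g h := rfl

/-- A discrete opfibration over a profunctor `K` from `C` to `D`: a profunctor `K'` with
discrete opfibrations `p`, `q` over `C` and `D`, a strict morphism `φ` of profunctors over
`(p, q)`, such that heteromorphisms lift uniquely along `φ` given a lift of their domain. -/
structure DOpfOverProf (K : Cᵒᵖ × D ⥤ Type u) where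
  C' : Cat.{u, u}
  D' : Cat.{u, u}
  K' : Opposite C' × D' ⥤ Type u
  p : C' ⥤ C
  q : D' ⥤ D
  hp : IsDiscreteOpfib p
  hq : IsDiscreteOpfib q
  φ : ∀ (c' : C') (d' : D'), K'.obj (op c', d') → K.obj (op (p.obj c'), q.obj d')
  φnat : ∀ {c₁ c₂ : C'} {d₁ d₂ : D'} (f : c₂ ⟶ c₁) (g : d₁ ⟶ d₂)
    (k : K'.obj (op c₁, d₁)),
    φ c₂ d₂ (K'.map (f.op, g) k) = K.map ((p.map f).op, q.map g) (φ c₁ d₁ k)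
  lift : ∀ (c' : C') (d : D) (k : K.obj (op (p.obj c'), d)),
    ∃! dk : Σ d' : D', K'.obj (op c', d'),
      ∃ h : q.obj dk.1 = d,
        K.map (𝟙 (op (p.obj c')), eqToHom h) (φ c' dk.1 dk.2) = k

/-- A morphism of discrete opfibrations over a profunctor `K`. -/
structure DOpfOverProfHom {K : Cᵒᵖ × D ⥤ Type u} (A B : DOpfOverProf K) where
  F : A.C' ⥤ B.C'
  H : A.D' ⥤ B.D'
  ψ : ∀ (c' : A.C') (d' : A.D'),
    A.K'.obj (op c', d') → B.K'.obj (op (F.obj c'), H.obj d')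
  hF : F ⋙ B.p = A.p
  hH : H ⋙ B.q = A.q
  ψnat : ∀ {c₁ c₂ : A.C'} {d₁ d₂ : A.D'} (f : c₂ ⟶ c₁) (g : d₁ ⟶ d₂)
    (k : A.K'.obj (op c₁, d₁)),
    ψ c₂ d₂ (A.K'.map (f.op, g) k) = B.K'.map ((F.map f).op, H.map g) (ψ c₁ d₁ k)
  hφ : ∀ (c' : A.C') (d' : A.D') (k : A.K'.obj (op c', d')),
    K.map (eqToHom (congrArg op (Functor.congr_obj hF c')),
        eqToHom (Functor.congr_obj hH d'))
      (B.φ (F.obj c') (H.obj d') (ψ c' d' k)) = A.φ c' d' k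

/-- The category of discrete opfibrations over a profunctor `K`. -/
instance (K : Cᵒᵖ × D ⥤ Type u) : Category (DOpfOverProf K) where
  Hom A B := DOpfOverProfHom A B
  id A :=
    { F := 𝟭 A.C'
      H := 𝟭 A.D'
      ψ := fun _ _ k => k
      hF := rfl
      hH := rfl
      ψnat := fun _ _ _ => rfl
      hφ := fun c' d' k => by
        simp only [eqToHom_refl]
        first
          | exact FunctorToTypes.map_id_apply K (A.φ c' d' k)
          | simp }
  comp {A B E} f g :=
    { F := f.F ⋙ g.F
      H := f.H ⋙ g.H
      ψ := fun c' d' k => g.ψ (f.F.obj c') (f.H.obj d') (f.ψ c' d' k)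
      hF := by rw [Functor.assoc, g.hF, f.hF]
      hH := by rw [Functor.assoc, g.hH, f.hH]
      ψnat := fun a b k => by dsimp only; rw [f.ψnat, g.ψnat]; rfl
      hφ := fun c' d' k => by
        have h1 := f.hφ c' d' k
        have h2 := g.hφ (f.F.obj c') (f.H.obj d') (f.ψ c' d' k)
        rw [← h1, ← h2, ← FunctorToTypes.map_comp_apply]
        congr 1 <;> simp [eqToHom_trans] }
  id_comp f := by cases f; rfl
  comp_id f := by cases f; rfl
  assoc f g h := rfl

/-!
The equivalence is the category-of-elements construction. An instance `(X, Y, α)` is sent to the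
projections `∫X ⥤ C` and `∫Y ⥤ D` together with the profunctor on elements whose value at
`((c, x), (d, y))` is `{k ∈ K(c, d) | α x k = y}`; unique lifting of heteromorphisms just says that
`α x k` is determined by `x` and `k`. A functor `∫X ⥤ ∫X'` over `C` is induced by a unique natural
transformation `X ⟶ X'`, which gives full faithfulness. Conversely, a discrete opfibration `p` is
recovered, up to isomorphism over the base, as the category of elements of its fibre functor
`b ↦ p⁻¹ b`, and a discrete opfibration over `K` is recovered from the instance on the two fibre
functors whose action sends `(c', k)` to the codomain of the unique lift of `k` at `c'`.
-/

universe v₁ v₂ v₃ u₁ u₂ u₃ w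

lemma CategoryTheory.Functor.ext_of_comp_faithful {A : Type u₁} {E : Type u₂} {B : Type u₃}
    [Category.{v₁} A] [Category.{v₂} E] [Category.{v₃} B] {F G : A ⥤ E} (P : E ⥤ B) [P.Faithful]
    (h_obj : ∀ a, F.obj a = G.obj a) (h : F ⋙ P = G ⋙ P) : F = G :=
  Functor.ext h_obj fun _ _ f =>
    P.map_injective (by simpa [eqToHom_map] using Functor.congr_hom h f)

namespace CategoryTheory.CategoryOfElements

variable {C : Type u₁} [Category.{v₁} C] {X Y : C ⥤ Type w} {F : X.Elements ⥤ Y.Elements}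

lemma fst_obj_of_comp_π (hF : F ⋙ π Y = π X) (x : X.Elements) : (F.obj x).1 = x.1 :=
  Functor.congr_obj hF x

lemma val_map_of_comp_π (hF : F ⋙ π Y = π X) {x x' : X.Elements} (u : x ⟶ x') :
    (F.map u).1 =
      eqToHom (fst_obj_of_comp_π hF x) ≫ u.1 ≫ eqToHom (fst_obj_of_comp_π hF x').symm :=
  Functor.congr_hom hF u

lemma eq_mk_map_eqToHom {c : C} (y : Y.Elements) (h : y.1 = c) :
    y = Y.elementsMk c (Y.map (eqToHom h) y.2) := by
  subst h
  simp only [eqToHom_refl, Functor.map_id_apply]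
  rfl

def natTransOfCompπ (hF : F ⋙ π Y = π X) : X ⟶ Y where
  app c := ↾fun x => Y.map (eqToHom (fst_obj_of_comp_π hF (X.elementsMk c x)))
    (F.obj (X.elementsMk c x)).2
  naturality c c' f := by
    ext x
    let u : X.elementsMk c x ⟶ X.elementsMk c' (X.map f x) := homMk _ _ f rfl
    change Y.map (eqToHom _) (F.obj (X.elementsMk c' (X.map f x))).2 =
      Y.map f (Y.map (eqToHom _) (F.obj (X.elementsMk c x)).2)
    rw [← (F.map u).2, ← Functor.map_comp_apply, ← Functor.map_comp_apply,
      val_map_of_comp_π hF u]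
    simp [u]

lemma map_natTransOfCompπ (hF : F ⋙ π Y = π X) : map (natTransOfCompπ hF) = F :=
  Functor.ext_of_comp_faithful (π Y)
    (fun x => (eq_mk_map_eqToHom (F.obj x) (fst_obj_of_comp_π hF x)).symm)
    (by rw [map_π, hF])

lemma map_injective : Function.Injective (map : (X ⟶ Y) → (X.Elements ⥤ Y.Elements)) := by
  intro α β h
  ext c x
  exact eq_of_heq (Sigma.mk.inj (Functor.congr_obj h ⟨c, x⟩)).2

end CategoryTheory.CategoryOfElements

namespace IsDiscreteOpfib

variable {E : Type u₁} {B : Type u₂} [Category.{v₁} E] [Category.{v₂} B] {p : E ⥤ B}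
  (hp : IsDiscreteOpfib p)

noncomputable def lift {e : E} {b : B} (f : p.obj e ⟶ b) : Σ e' : E, e ⟶ e' :=
  (hp f).exists.choose

lemma obj_lift_fst {e : E} {b : B} (f : p.obj e ⟶ b) : p.obj (hp.lift f).1 = b :=
  (hp f).exists.choose_spec.choose

lemma map_lift_snd {e : E} {b : B} (f : p.obj e ⟶ b) :
    p.map (hp.lift f).2 = f ≫ eqToHom (hp.obj_lift_fst f).symm := by
  rw [← comp_eqToHom_iff]
  exact (hp f).exists.choose_spec.choose_spec

lemma lift_eq {e e' : E} {b : B} (f : p.obj e ⟶ b) (g : e ⟶ e') (h : p.obj e' = b)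
    (hg : p.map g ≫ eqToHom h = f) : hp.lift f = ⟨e', g⟩ :=
  (hp f).unique ⟨hp.obj_lift_fst f, by simp [map_lift_snd]⟩ ⟨h, hg⟩

@[simp]
lemma lift_map {e e' : E} (g : e ⟶ e') : hp.lift (p.map g) = ⟨e', g⟩ :=
  hp.lift_eq _ g rfl (by simp)

@[simp]
lemma lift_id (e : E) : hp.lift (𝟙 (p.obj e)) = ⟨e, 𝟙 e⟩ :=
  hp.lift_eq _ _ rfl (by simp)

lemma lift_comp {e : E} {b b' : B} (f : p.obj e ⟶ b) (g : b ⟶ b') :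
    hp.lift (f ≫ g) = ⟨(hp.lift (eqToHom (hp.obj_lift_fst f) ≫ g)).1,
      (hp.lift f).2 ≫ (hp.lift (eqToHom (hp.obj_lift_fst f) ≫ g)).2⟩ :=
  hp.lift_eq _ _ (hp.obj_lift_fst _) (by simp [map_lift_snd])

lemma hom_ext (hp : IsDiscreteOpfib p) {e e' : E} {g₁ g₂ : e ⟶ e'} (h : p.map g₁ = p.map g₂) :
    g₁ = g₂ :=
  eq_of_heq (Sigma.mk.inj ((hp.lift_map g₁).symm.trans (h ▸ hp.lift_map g₂))).2

lemma faithful (hp : IsDiscreteOpfib p) : p.Faithful :=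
  ⟨hp.hom_ext⟩

noncomputable def fiberFunctor : B ⥤ Type u₁ where
  obj b := {e : E // p.obj e = b}
  map f := ↾fun x => ⟨(hp.lift (eqToHom x.2 ≫ f)).1, hp.obj_lift_fst _⟩
  map_id b := by
    ext ⟨e, rfl⟩
    simp
  map_comp f g := by
    ext ⟨e, rfl⟩
    simp only [TypeCat.Fun.toFun_apply, types_comp_apply, TypeCat.ofHom_apply, eqToHom_refl,
      Category.id_comp]
    rw [hp.lift_comp]

lemma fiberFunctor_map_mk {e e' : E} (g : e ⟶ e') :
    hp.fiberFunctor.map (p.map g) ⟨e, rfl⟩ = ⟨e', rfl⟩ :=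
  Subtype.ext (congrArg Sigma.fst (hp.lift_eq _ g rfl (by simp)))

open CategoryOfElements

lemma lift_fst_of_hom {x y : hp.fiberFunctor.Elements} (u : x ⟶ y) :
    (hp.lift (eqToHom x.2.2 ≫ u.1)).1 = y.2.1 :=
  congrArg Subtype.val u.2

noncomputable def fromFiberElements : hp.fiberFunctor.Elements ⥤ E where
  obj x := x.2.1
  map {x y} u := (hp.lift (eqToHom x.2.2 ≫ u.1)).2 ≫ eqToHom (hp.lift_fst_of_hom u)
  map_id x := hp.hom_ext (by simp [map_lift_snd, eqToHom_map])
  map_comp u v := hp.hom_ext (by simp [map_lift_snd, eqToHom_map])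

lemma map_fromFiberElements_map {x y : hp.fiberFunctor.Elements} (u : x ⟶ y) :
    p.map (hp.fromFiberElements.map u) = eqToHom x.2.2 ≫ u.1 ≫ eqToHom y.2.2.symm := by
  simp [fromFiberElements, map_lift_snd, eqToHom_map]

lemma fromFiberElements_comp : hp.fromFiberElements ⋙ p = π hp.fiberFunctor :=
  CategoryTheory.Functor.ext (fun (x : hp.fiberFunctor.Elements) => x.2.2)
    fun _ _ u => hp.map_fromFiberElements_map u

noncomputable def toFiberElements : E ⥤ hp.fiberFunctor.Elements where
  obj e := hp.fiberFunctor.elementsMk (p.obj e) ⟨e, rfl⟩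
  map g := homMk _ _ (p.map g) (hp.fiberFunctor_map_mk g)

lemma toFiberElements_comp : hp.toFiberElements ⋙ π hp.fiberFunctor = p :=
  rfl

lemma fromFiberElements_comp_toFiberElements :
    hp.fromFiberElements ⋙ hp.toFiberElements = 𝟭 _ :=
  Functor.ext_of_comp_faithful (π _) (fun x => by obtain ⟨_, _, rfl⟩ := x; rfl)
    (by rw [Functor.assoc, toFiberElements_comp, fromFiberElements_comp, Functor.id_comp])

lemma toFiberElements_comp_fromFiberElements :
    hp.toFiberElements ⋙ hp.fromFiberElements = 𝟭 E :=
  have := hp.faithful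
  Functor.ext_of_comp_faithful p (fun _ => rfl)
    (by rw [Functor.assoc, fromFiberElements_comp, toFiberElements_comp, Functor.id_comp])

end IsDiscreteOpfib

section Bifunctor

open CategoryTheory.Prod

variable {X Y : Type*} [Category X] [Category Y] (K : X × Y ⥤ Type w)

lemma CategoryTheory.Functor.map_mkHom_id_apply (x : X) (y : Y) (k : K.obj (x, y)) :
    K.map (𝟙 x ×ₘ 𝟙 y) k = k :=
  K.map_id_apply (x, y) k

lemma CategoryTheory.Functor.map_mkHom_comp_apply {x₁ x₂ x₃ : X} {y₁ y₂ y₃ : Y} (f₁ : x₁ ⟶ x₂)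
    (f₂ : x₂ ⟶ x₃) (g₁ : y₁ ⟶ y₂) (g₂ : y₂ ⟶ y₃) (k : K.obj (x₁, y₁)) :
    K.map (f₁ ≫ f₂ ×ₘ g₁ ≫ g₂) k = K.map (f₂ ×ₘ g₂) (K.map (f₁ ×ₘ g₁) k) :=
  K.map_comp_apply (f₁ ×ₘ g₁) (f₂ ×ₘ g₂) k

lemma CategoryTheory.Functor.heq_of_map_mkHom_eqToHom {x x' : X} {y y' : Y} (hx : x = x')
    (hy : y = y') {k : K.obj (x, y)} {k' : K.obj (x', y')}
    (h : K.map (eqToHom hx ×ₘ eqToHom hy) k = k') : k ≍ k' := by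
  subst hx hy
  rw [eqToHom_refl, eqToHom_refl, K.map_mkHom_id_apply] at h
  rw [h]

lemma CategoryTheory.Functor.map_op_mkHom_hcongr {X : Type*} [Category X] (K : Xᵒᵖ × Y ⥤ Type w)
    {a a' b b' : X} {c c' d d' : Y} (ha : a = a') (hb : b = b') (hc : c = c') (hd : d = d')
    {f : a ⟶ b} {f' : a' ⟶ b'} (hf : f ≍ f') {g : c ⟶ d} {g' : c' ⟶ d'} (hg : g ≍ g')
    {k : K.obj (op b, c)} {k' : K.obj (op b', c')} (hk : k ≍ k') :
    K.map (f.op ×ₘ g) k ≍ K.map (f'.op ×ₘ g') k' := by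
  subst ha hb hc hd hf hg hk
  rfl

end Bifunctor

lemma isDiscreteOpfib_π {C : Type*} [Category C] (X : C ⥤ Type w) :
    IsDiscreteOpfib (CategoryOfElements.π X) := by
  intro x c f
  refine ⟨⟨X.elementsMk c (X.map f x.2), CategoryOfElements.homMk _ _ f rfl⟩,
    ⟨rfl, Category.comp_id _⟩, ?_⟩
  rintro ⟨⟨c', x'⟩, g⟩ ⟨h, hg⟩
  change c' = c at h
  subst h
  have hgf : g.1 = f := (Category.comp_id _).symm.trans hg
  obtain rfl : x' = X.map f x.2 := hgf ▸ g.2.symm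
  exact Sigma.ext rfl (heq_of_eq (CategoryOfElements.ext _ _ _ hgf))

namespace DOpfOverProf

open CategoryTheory.Prod

variable {K : Cᵒᵖ × D ⥤ Type u} (A : DOpfOverProf K)

noncomputable def liftHet (c' : A.C') (d : D) (k : K.obj (op (A.p.obj c'), d)) :
    Σ d' : A.D', A.K'.obj (op c', d') :=
  (A.lift c' d k).exists.choose

lemma obj_liftHet_fst (c' : A.C') (d : D) (k : K.obj (op (A.p.obj c'), d)) :
    A.q.obj (A.liftHet c' d k).1 = d :=
  (A.lift c' d k).exists.choose_spec.choose

lemma map_φ_liftHet_snd (c' : A.C') (d : D) (k : K.obj (op (A.p.obj c'), d)) :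
    K.map (𝟙 _ ×ₘ eqToHom (A.obj_liftHet_fst c' d k)) (A.φ c' _ (A.liftHet c' d k).2) = k :=
  (A.lift c' d k).exists.choose_spec.choose_spec

lemma liftHet_φ {c' : A.C'} {d' : A.D'} (k' : A.K'.obj (op c', d')) :
    A.liftHet c' (A.q.obj d') (A.φ c' d' k') = ⟨d', k'⟩ :=
  (A.lift _ _ _).unique ⟨A.obj_liftHet_fst _ _ _, A.map_φ_liftHet_snd _ _ _⟩
    ⟨rfl, by rw [eqToHom_refl, K.map_mkHom_id_apply]⟩

lemma φ_injective (c' : A.C') (d' : A.D') : Function.Injective (A.φ c' d') := fun k₁ k₂ h =>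
  eq_of_heq (Sigma.mk.inj ((A.liftHet_φ k₁).symm.trans (h ▸ A.liftHet_φ k₂))).2

variable {A} {B : DOpfOverProf K}

lemma hom_ext {f g : A ⟶ B} (hF : f.F = g.F) (hH : f.H = g.H) : f = g := by
  revert hF hH
  obtain ⟨F, H, ψ₁, hF₁, hH₁, -, hφ₁⟩ := f
  obtain ⟨F', H', ψ₂, hF₂, hH₂, -, hφ₂⟩ := g
  rintro rfl rfl
  have hψ : ψ₁ = ψ₂ := by
    funext c' d' k
    exact B.φ_injective _ _ (eq_of_heq ((K.heq_of_map_mkHom_eqToHom _ _ (hφ₁ c' d' k)).trans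
      (K.heq_of_map_mkHom_eqToHom _ _ (hφ₂ c' d' k)).symm))
  subst hψ
  rfl

/-- `B.φ` is injective, so `hφ` determines `ψ` and forces its naturality. -/
lemma ψnat_of_hφ (F : A.C' ⥤ B.C') (H : A.D' ⥤ B.D') (hF : F ⋙ B.p = A.p) (hH : H ⋙ B.q = A.q)
    (ψ : ∀ (c' : A.C') (d' : A.D'), A.K'.obj (op c', d') → B.K'.obj (op (F.obj c'), H.obj d'))
    (hφ : ∀ c' d' k, K.map (eqToHom (congrArg op (Functor.congr_obj hF c')) ×ₘ
        eqToHom (Functor.congr_obj hH d')) (B.φ (F.obj c') (H.obj d') (ψ c' d' k)) = A.φ c' d' k)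
    {c₁ c₂ : A.C'} {d₁ d₂ : A.D'} (f : c₂ ⟶ c₁) (g : d₁ ⟶ d₂) (k : A.K'.obj (op c₁, d₁)) :
    ψ c₂ d₂ (A.K'.map (f.op ×ₘ g) k) = B.K'.map ((F.map f).op ×ₘ H.map g) (ψ c₁ d₁ k) := by
  have hφ' c' d' k := K.heq_of_map_mkHom_eqToHom _ _ (hφ c' d' k)
  refine B.φ_injective _ _ (eq_of_heq ?_)
  refine (hφ' _ _ _).trans ((heq_of_eq (A.φnat f g k)).trans ?_)
  refine HEq.trans ?_ (heq_of_eq (B.φnat _ _ _).symm)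
  exact K.map_op_mkHom_hcongr (Functor.congr_obj hF _).symm (Functor.congr_obj hF _).symm
    (Functor.congr_obj hH _).symm (Functor.congr_obj hH _).symm
    (Functor.hcongr_hom hF f).symm (Functor.hcongr_hom hH g).symm (hφ' _ _ _).symm

variable (A B) in
noncomputable def homMk (F : A.C' ⥤ B.C') (H : A.D' ⥤ B.D') (hF : F ⋙ B.p = A.p)
    (hH : H ⋙ B.q = A.q)
    (hφ : ∀ c' d' (k : A.K'.obj (op c', d')), ∃ k' : B.K'.obj (op (F.obj c'), H.obj d'),
      K.map (eqToHom (congrArg op (Functor.congr_obj hF c')) ×ₘ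
        eqToHom (Functor.congr_obj hH d')) (B.φ _ _ k') = A.φ c' d' k) : A ⟶ B where
  F := F
  H := H
  ψ c' d' k := (hφ c' d' k).choose
  hF := hF
  hH := hH
  ψnat := ψnat_of_hφ F H hF hH _ fun c' d' k => (hφ c' d' k).choose_spec
  hφ c' d' k := (hφ c' d' k).choose_spec

end DOpfOverProf

namespace ProfInstance

open CategoryTheory.Prod CategoryOfElements

variable {K : Cᵒᵖ × D ⥤ Type u} (I : ProfInstance K)

lemma act_map_map {c c' : C} {d d' : D} (f : c ⟶ c') (g : d ⟶ d') (x : I.X.obj c)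
    (k : K.obj (op c', d)) :
    I.Y.map g (I.act (I.X.map f x) k) = I.act x (K.map (f.op ×ₘ g) k) := by
  rw [I.act_map, I.map_act, ← K.map_mkHom_comp_apply, Category.comp_id, Category.id_comp]

lemma map_act_eqToHom {c₁ c : C} {d₁ d : D} (hc : c₁ = c) (hd : d₁ = d) (x : I.X.obj c₁)
    (k : K.obj (op c₁, d₁)) : I.Y.map (eqToHom hd) (I.act x k) =
      I.act (I.X.map (eqToHom hc) x) (K.map (eqToHom (congrArg op hc) ×ₘ eqToHom hd) k) := by
  subst hc hd
  simp only [eqToHom_refl, Functor.map_id_apply]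
  rw [K.map_mkHom_id_apply]

def elementsProfunctor : (Cat.of I.X.Elements)ᵒᵖ × Cat.of I.Y.Elements ⥤ Type u where
  obj xy := {k : K.obj (op xy.1.unop.1, xy.2.1) // I.act xy.1.unop.2 k = xy.2.2}
  map uv := ↾fun k => ⟨K.map (uv.1.unop.1.op ×ₘ uv.2.1) k.1, by
    rw [← I.act_map_map, uv.1.unop.2, k.2, uv.2.2]⟩
  map_id xy := by
    ext k
    exact K.map_mkHom_id_apply _ _ k.1
  map_comp uv uv' := by
    ext k
    exact K.map_mkHom_comp_apply uv.1.unop.1.op uv'.1.unop.1.op uv.2.1 uv'.2.1 k.1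

noncomputable def toDOpfOverProf : DOpfOverProf K where
  C' := Cat.of I.X.Elements
  D' := Cat.of I.Y.Elements
  K' := I.elementsProfunctor
  p := π I.X
  q := π I.Y
  hp := isDiscreteOpfib_π I.X
  hq := isDiscreteOpfib_π I.Y
  φ _ _ k := k.1
  φnat _ _ _ := rfl
  lift x d k := ⟨⟨I.Y.elementsMk d (I.act x.2 k), ⟨k, rfl⟩⟩, ⟨rfl, K.map_mkHom_id_apply _ _ k⟩,
    by
    rintro ⟨⟨d', y'⟩, k'⟩ ⟨h, hk⟩
    change d' = d at h
    subst h
    have hk' : k'.1 = k := (K.map_mkHom_id_apply _ _ _).symm.trans hk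
    obtain rfl : y' = I.act x.2 k := hk' ▸ k'.2.symm
    exact Sigma.ext rfl (heq_of_eq (Subtype.ext hk'))⟩

variable {I} {J : ProfInstance K}

noncomputable def toDOpfOverProfMap (m : I ⟶ J) : I.toDOpfOverProf ⟶ J.toDOpfOverProf where
  F := map m.1.1
  H := map m.1.2
  ψ x y k := ⟨k.1, (m.2 x.2 k.1).symm.trans (congrArg (m.1.2.app y.1) k.2)⟩
  hF := map_π m.1.1
  hH := map_π m.1.2
  ψnat _ _ _ := rfl
  hφ _ _ k := K.map_mkHom_id_apply _ _ k.1

variable (K) in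
noncomputable def elementsFunctor : ProfInstance K ⥤ DOpfOverProf K where
  obj := toDOpfOverProf
  map := toDOpfOverProfMap
  map_id _ := DOpfOverProf.hom_ext rfl rfl
  map_comp _ _ := DOpfOverProf.hom_ext rfl rfl

instance : (elementsFunctor K).Faithful where
  map_injective h := Subtype.ext (Prod.ext (map_injective (congrArg DOpfOverProfHom.F h))
    (map_injective (congrArg DOpfOverProfHom.H h)))

lemma act_natTransOfCompπ (m : I.toDOpfOverProf ⟶ J.toDOpfOverProf) {c : C} {d : D}
    (x : I.X.obj c) (k : K.obj (op c, d)) :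
    (natTransOfCompπ m.hH).app d (I.act x k) = J.act ((natTransOfCompπ m.hF).app c x) k := by
  let x' : I.X.Elements := I.X.elementsMk c x
  let y' : I.Y.Elements := I.Y.elementsMk d (I.act x k)
  let k' := m.ψ x' y' ⟨k, rfl⟩
  have := J.map_act_eqToHom (fst_obj_of_comp_π m.hF x') (fst_obj_of_comp_π m.hH y')
    (m.F.obj x').2 k'.1
  rw [k'.2] at this
  exact this.trans (congrArg _ (m.hφ x' y' ⟨k, rfl⟩))

instance : (elementsFunctor K).Full where
  map_surjective m := ⟨⟨(natTransOfCompπ m.hF, natTransOfCompπ m.hH), act_natTransOfCompπ m⟩,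
    DOpfOverProf.hom_ext (map_natTransOfCompπ m.hF) (map_natTransOfCompπ m.hH)⟩

end ProfInstance

namespace DOpfOverProf

open CategoryTheory.Prod IsDiscreteOpfib

variable {K : Cᵒᵖ × D ⥤ Type u} (A : DOpfOverProf K)

noncomputable def fiberAct {c : C} {d : D} (x : A.hp.fiberFunctor.obj c) (k : K.obj (op c, d)) :
    A.hq.fiberFunctor.obj d :=
  ⟨(A.liftHet x.1 d (K.map (eqToHom (congrArg op x.2.symm) ×ₘ 𝟙 d) k)).1,
    A.obj_liftHet_fst _ _ _⟩

lemma fiberAct_φ {c' : A.C'} {d' : A.D'} (k' : A.K'.obj (op c', d')) :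
    A.fiberAct ⟨c', rfl⟩ (A.φ c' d' k') = ⟨d', rfl⟩ := by
  apply Subtype.ext
  dsimp only [fiberAct]
  rw [eqToHom_refl, K.map_mkHom_id_apply, liftHet_φ]

noncomputable def fiberInstance : ProfInstance K where
  X := A.hp.fiberFunctor
  Y := A.hq.fiberFunctor
  act := A.fiberAct
  act_map {c d d'} g x k := by
    -- Write `k` as a transported `φ k₀` and `g` as `q.map ℓ`; then both sides are `⟨d₁, rfl⟩`.
    obtain ⟨c', rfl⟩ := x
    obtain ⟨⟨d₀, k₀⟩, rfl, rfl⟩ := (A.lift c' d k).exists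
    obtain ⟨⟨d₁, ℓ⟩, rfl, rfl⟩ := (A.hq g).exists
    have := A.φnat (𝟙 c') ℓ k₀
    simp only [CategoryTheory.Functor.map_id, op_id] at this
    simp only [eqToHom_refl, Category.comp_id]
    rw [K.map_mkHom_id_apply, ← this, fiberAct_φ, fiberAct_φ, fiberFunctor_map_mk]
  map_act {c c' d} f x k := by
    obtain ⟨c₀, rfl⟩ := x
    obtain ⟨⟨c₁, ℓ⟩, rfl, rfl⟩ := (A.hp f).exists
    obtain ⟨⟨d₀, k₀⟩, rfl, rfl⟩ := (A.lift c₁ d k).exists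
    have := A.φnat ℓ (𝟙 d₀) k₀
    simp only [CategoryTheory.Functor.map_id] at this
    simp only [eqToHom_refl, Category.comp_id]
    rw [K.map_mkHom_id_apply, ← this, fiberFunctor_map_mk, fiberAct_φ, fiberAct_φ]

noncomputable def fiberInstanceIso : A.fiberInstance.toDOpfOverProf ≅ A where
  hom := homMk _ _ A.hp.fromFiberElements A.hq.fromFiberElements A.hp.fromFiberElements_comp
    A.hq.fromFiberElements_comp (by
      rintro ⟨c, c', hc⟩ ⟨d, d', hd⟩ ⟨k, hk⟩
      subst hc
      obtain ⟨⟨d₀, k₀⟩, rfl, rfl⟩ := (A.lift c' d k).exists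
      rw [eqToHom_refl, K.map_mkHom_id_apply] at hk
      obtain rfl : d₀ = d' := congrArg Subtype.val ((A.fiberAct_φ k₀).symm.trans hk)
      exact ⟨k₀, rfl⟩)
  inv :=
    { F := A.hp.toFiberElements
      H := A.hq.toFiberElements
      ψ _ _ k := ⟨A.φ _ _ k, A.fiberAct_φ k⟩
      hF := A.hp.toFiberElements_comp
      hH := A.hq.toFiberElements_comp
      ψnat f g k := Subtype.ext (A.φnat f g k)
      hφ _ _ k := K.map_mkHom_id_apply _ _ _ }
  hom_inv_id := hom_ext A.hp.fromFiberElements_comp_toFiberElements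
    A.hq.fromFiberElements_comp_toFiberElements
  inv_hom_id := hom_ext A.hp.toFiberElements_comp_fromFiberElements
    A.hq.toFiberElements_comp_fromFiberElements

end DOpfOverProf

instance {K : Cᵒᵖ × D ⥤ Type u} : (ProfInstance.elementsFunctor K).EssSurj where
  mem_essImage A := ⟨A.fiberInstance, ⟨A.fiberInstanceIso⟩⟩

instance {K : Cᵒᵖ × D ⥤ Type u} : (ProfInstance.elementsFunctor K).IsEquivalence where

/-- For every profunctor `K` from `C` to `D`, the category of instances of `K` is equivalent
to the category of discrete opfibrations over `K`. -/
theorem profInstances_equiv_discreteOpfibrations (K : Cᵒᵖ × D ⥤ Type u) :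
    Nonempty (ProfInstance K ≌ DOpfOverProf K) :=
  ⟨(ProfInstance.elementsFunctor K).asEquivalence⟩
end

section
/- Let C be a category. In the category of functors C ⥤ Cat with natural transformations as morphisms, every morphism α : X ⟶ Y factors as α = β ≫ γ where every component of β is an initial functor and every component of γ is a discrete opfibration; moreover every natural transformation all of whose components are initial functors is strictly left orthogonal to every natural transformation all of whose components are discrete opfibrations (every strictly commuting square between them admits a unique diagonal natural transformation making both triangles commute strictly). -/
open CategoryTheory

universe u

/-!
Factorization: `F : A ⥤ B` factors through the category of elements of `b ↦ π₀(F / b)`, sending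
`a` to the component of `𝟙 (F a)`. The projection from a category of elements is a discrete
opfibration, and the comma category of the first leg over `(b, x)` is the connected component
`x` of `F / b`, so the first leg is initial.

Orthogonality: given `u` initial, `p` a discrete opfibration and a square `u ⋙ s = t ⋙ p`, the
diagonal sends `b` to the endpoint of the lift at `t a` of `s.map f`, for any `f : u a ⟶ b`;
this does not depend on `(a, f)` because `u / b` is connected, and morphisms are lifted in the
same way. Discrete opfibrations are faithful, so the diagonal is unique.

Both properties pass to `C ⥤ Cat` componentwise: uniqueness of the diagonals makes the
componentwise diagonals natural, and makes a choice of factorizations functorial, which is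
what extends factorizations to functor categories.
-/

universe v

namespace CategoryTheory

lemma Functor.ext_of_comp_faithful_s11 {B E F : Type*} [Category B] [Category E] [Category F]
    {p : E ⥤ F} [p.Faithful] {d₁ d₂ : B ⥤ E} (hobj : ∀ b, d₁.obj b = d₂.obj b)
    (h : d₁ ⋙ p = d₂ ⋙ p) : d₁ = d₂ :=
  Functor.ext hobj fun _ _ k =>
    p.map_injective (by simpa [eqToHom_map] using Functor.congr_hom h k)

lemma isConnected_of_surjective_obj {J K : Type*} [Category J] [Category K] [IsConnected J]
    (G : J ⥤ K) (hG : Function.Surjective G.obj) : IsConnected K := by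
  have : Nonempty K := ⟨G.obj (Classical.arbitrary J)⟩
  refine IsConnected.of_constant_of_preserves_morphisms fun f hf k k' => ?_
  obtain ⟨j, rfl⟩ := hG k
  obtain ⟨j', rfl⟩ := hG k'
  exact constant_of_preserves_morphisms (f ∘ G.obj) (fun _ _ φ => hf (G.map φ)) j j'

namespace MorphismProperty

variable {D : Type*} [Category D]

/-- Strict orthogonality `W₁ ⧄ W₂`. -/
def HasUniqueLifts (W₁ W₂ : MorphismProperty D) : Prop :=
  ∀ ⦃A B E F : D⦄ (i : A ⟶ B) (p : E ⟶ F), W₁ i → W₂ p →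
    ∀ (t : A ⟶ E) (s : B ⟶ F), i ≫ s = t ≫ p → ∃! d : B ⟶ E, i ≫ d = t ∧ d ≫ p = s

namespace HasUniqueLifts

variable {W₁ W₂ : MorphismProperty D}

section Lift

variable (h : HasUniqueLifts W₁ W₂) {A B E F : D} {i : A ⟶ B} {p : E ⟶ F} (hi : W₁ i) (hp : W₂ p)
  {t : A ⟶ E} {s : B ⟶ F} (w : i ≫ s = t ≫ p)

noncomputable def lift : B ⟶ E := (h i p hi hp t s w).exists.choose

lemma fac_left : i ≫ h.lift hi hp w = t := (h i p hi hp t s w).exists.choose_spec.1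

lemma fac_right : h.lift hi hp w ≫ p = s := (h i p hi hp t s w).exists.choose_spec.2

lemma lift_unique (d : B ⟶ E) (h₁ : i ≫ d = t) (h₂ : d ≫ p = s) : d = h.lift hi hp w :=
  (h i p hi hp t s w).unique ⟨h₁, h₂⟩ ⟨h.fac_left hi hp w, h.fac_right hi hp w⟩

end Lift

lemma functorCategory (h : HasUniqueLifts W₁ W₂) (J : Type*) [Category J] :
    HasUniqueLifts (W₁.functorCategory J) (W₂.functorCategory J) := by
  intro A B E F i p hi hp t s w
  have w (j : J) : i.app j ≫ s.app j = t.app j ≫ p.app j := congr_app w j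
  let d (j : J) := h.lift (hi j) (hp j) (w j)
  have naturality {j j' : J} (f : j ⟶ j') : B.map f ≫ d j' = d j ≫ E.map f := by
    have w' : i.app j ≫ B.map f ≫ s.app j' = (t.app j ≫ E.map f) ≫ p.app j' := by
      rw [← i.naturality_assoc, w j', ← t.naturality, Category.assoc]
    rw [h.lift_unique (hi j) (hp j') w' (B.map f ≫ d j')
        (by rw [← i.naturality_assoc, fac_left, t.naturality]) (by rw [Category.assoc, fac_right]),
      h.lift_unique (hi j) (hp j') w' (d j ≫ E.map f) (by rw [← Category.assoc, fac_left])
        (by rw [Category.assoc, p.naturality, ← Category.assoc, fac_right, s.naturality])]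
  refine ⟨⟨d, @naturality⟩, ⟨?_, ?_⟩, fun d' ⟨h₁, h₂⟩ => ?_⟩
  · ext j; exact h.fac_left (hi j) (hp j) (w j)
  · ext j; exact h.fac_right (hi j) (hp j) (w j)
  · ext j; exact h.lift_unique (hi j) (hp j) (w j) _ (congr_app h₁ j) (congr_app h₂ j)

noncomputable def functorialFactorizationData (h : HasUniqueLifts W₁ W₂)
    (data : FactorizationData W₁ W₂) : FunctorialFactorizationData W₁ W₂ where
  Z :=
    { obj f := (data f.hom).Z
      map {f g} φ := h.lift (data f.hom).hi (data g.hom).hp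
        (show (data f.hom).i ≫ (data f.hom).p ≫ φ.right =
            (φ.left ≫ (data g.hom).i) ≫ (data g.hom).p by simp)
      map_id f := (h.lift_unique _ _ _ _ (by simp) (by simp)).symm
      map_comp φ ψ := (h.lift_unique _ _ _ _
        (by rw [← Category.assoc, fac_left, Category.assoc, fac_left, Arrow.comp_left,
          Category.assoc])
        (by rw [Category.assoc, fac_right, ← Category.assoc, fac_right, Arrow.comp_right,
          Category.assoc])).symm }
  i := { app f := (data f.hom).i, naturality _ _ _ := by dsimp; exact (h.fac_left ..).symm }
  p := { app f := (data f.hom).p, naturality _ _ _ := by dsimp; exact h.fac_right .. }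
  fac := by ext f; exact (data f.hom).fac
  hi f := (data f.hom).hi
  hp f := (data f.hom).hp

lemma hasFunctorialFactorization [HasFactorization W₁ W₂] (h : HasUniqueLifts W₁ W₂) :
    HasFunctorialFactorization W₁ W₂ :=
  ⟨⟨h.functorialFactorizationData (factorizationData W₁ W₂)⟩⟩

end HasUniqueLifts

end MorphismProperty

end CategoryTheory

namespace IsDiscreteOpfib

variable {E F : Type*} [Category E] [Category F] {p : E ⥤ F}

lemma faithful_s11 (hp : IsDiscreteOpfib p) : p.Faithful where
  map_injective {_ _} g₁ g₂ w :=
    eq_of_heq (Sigma.mk.inj ((hp (p.map g₂)).unique ⟨rfl, by simpa using w⟩ ⟨rfl, by simp⟩)).2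

section Diagonal

variable {A B : Type*} [Category A] [Category B] {u : A ⥤ B} (hp : IsDiscreteOpfib p)
  {t : A ⥤ E} {s : B ⥤ F} (w : u ⋙ s = t ⋙ p)

def arrowOver {b : B} (j : CostructuredArrow u b) : p.obj (t.obj j.left) ⟶ s.obj b :=
  eqToHom (Functor.congr_obj w j.left).symm ≫ s.map j.hom

lemma arrowOver_eq_of_hom {b : B} {j j' : CostructuredArrow u b} (φ : j ⟶ j') :
    arrowOver w j = p.map (t.map φ.left) ≫ arrowOver w j' := by
  have := Functor.congr_hom w φ.left
  simp only [Functor.comp_map] at this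
  rw [arrowOver, arrowOver, ← CostructuredArrow.w φ, Functor.map_comp, this]
  simp

variable [u.Initial]

noncomputable def diagonalObj (b : B) : E :=
  (hp (arrowOver w (Classical.arbitrary (CostructuredArrow u b)))).exists.choose.1

lemma eq_diagonalObj {b : B} (j : CostructuredArrow u b) {e : E} (g : t.obj j.left ⟶ e)
    (h : p.obj e = s.obj b) (hg : p.map g ≫ eqToHom h = arrowOver w j) :
    e = diagonalObj hp w b := by
  let c (j : CostructuredArrow u b) := (hp (arrowOver w j)).exists.choose
  have c_spec (j) : ∃ h : p.obj (c j).1 = s.obj b, p.map (c j).2 ≫ eqToHom h = arrowOver w j :=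
    (hp (arrowOver w j)).exists.choose_spec
  have eq_c (j) {e} (g : t.obj j.left ⟶ e) (h : p.obj e = s.obj b)
      (hg : p.map g ≫ eqToHom h = arrowOver w j) : e = (c j).1 :=
    congrArg Sigma.fst ((hp _).unique (y₁ := ⟨e, g⟩) ⟨h, hg⟩ (c_spec j))
  have c_const (j j' : CostructuredArrow u b) (φ : j ⟶ j') : (c j).1 = (c j').1 := by
    obtain ⟨h', hg'⟩ := c_spec j'
    refine (eq_c j (t.map φ.left ≫ (c j').2) h' ?_).symm
    rw [Functor.map_comp, Category.assoc, hg', ← arrowOver_eq_of_hom]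
  exact (eq_c j g h hg).trans (constant_of_preserves_morphisms _ c_const j _)

lemma obj_diagonalObj (b : B) : p.obj (diagonalObj hp w b) = s.obj b :=
  (hp _).exists.choose_spec.1

lemma exists_hom_diagonalObj {b : B} (j : CostructuredArrow u b) :
    ∃ g : t.obj j.left ⟶ diagonalObj hp w b,
      p.map g ≫ eqToHom (obj_diagonalObj hp w b) = arrowOver w j := by
  obtain ⟨⟨e, g⟩, ⟨h, hg⟩, -⟩ := hp (arrowOver w j)
  obtain rfl := eq_diagonalObj hp w j g h hg
  exact ⟨g, hg⟩

lemma exists_map_diagonalObj {b b' : B} (k : b ⟶ b') :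
    ∃ g : diagonalObj hp w b ⟶ diagonalObj hp w b',
      p.map g =
        eqToHom (obj_diagonalObj hp w b) ≫ s.map k ≫ eqToHom (obj_diagonalObj hp w b').symm := by
  let j := Classical.arbitrary (CostructuredArrow u b)
  obtain ⟨g₀, hg₀⟩ := exists_hom_diagonalObj hp w j
  obtain ⟨⟨e, g⟩, ⟨h, hg⟩, -⟩ := hp (eqToHom (obj_diagonalObj hp w b) ≫ s.map k)
  obtain rfl := eq_diagonalObj hp w (CostructuredArrow.mk (j.hom ≫ k)) (g₀ ≫ g) h (by
    rw [Functor.map_comp, Category.assoc, hg, ← Category.assoc, hg₀]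
    simp [arrowOver])
  exact ⟨g, by rw [(comp_eqToHom_iff h _ _).mp hg, Category.assoc]⟩

noncomputable def diagonalMap {b b' : B} (k : b ⟶ b') :
    diagonalObj hp w b ⟶ diagonalObj hp w b' :=
  (exists_map_diagonalObj hp w k).choose

@[simp]
lemma map_diagonalMap {b b' : B} (k : b ⟶ b') : p.map (diagonalMap hp w k) =
    eqToHom (obj_diagonalObj hp w b) ≫ s.map k ≫ eqToHom (obj_diagonalObj hp w b').symm :=
  (exists_map_diagonalObj hp w k).choose_spec

noncomputable def diagonal : B ⥤ E where
  obj := diagonalObj hp w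
  map := diagonalMap hp w
  map_id _ := hp.faithful_s11.map_injective (by simp)
  map_comp _ _ := hp.faithful_s11.map_injective (by simp)

lemma diagonal_comp : diagonal hp w ⋙ p = s :=
  CategoryTheory.Functor.ext (obj_diagonalObj hp w) fun _ _ k => map_diagonalMap hp w k

lemma comp_diagonal : u ⋙ diagonal hp w = t := by
  have := hp.faithful_s11
  exact Functor.ext_of_comp_faithful_s11 (p := p)
    (fun a => (eq_diagonalObj hp w (CostructuredArrow.mk (𝟙 (u.obj a))) (𝟙 (t.obj a))
      (Functor.congr_obj w a).symm (by simp [arrowOver])).symm)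
    (by rw [Functor.assoc, diagonal_comp, w])

lemma eq_diagonal {d : B ⥤ E} (h₁ : u ⋙ d = t) (h₂ : d ⋙ p = s) : d = diagonal hp w := by
  have := hp.faithful_s11
  refine Functor.ext_of_comp_faithful_s11 (fun b => ?_) (h₂.trans (diagonal_comp hp w).symm)
  let j := Classical.arbitrary (CostructuredArrow u b)
  refine eq_diagonalObj hp w j (eqToHom (Functor.congr_obj h₁ j.left).symm ≫ d.map j.hom)
    (Functor.congr_obj h₂ b) ?_
  have := Functor.congr_hom h₂ j.hom
  simp only [Functor.comp_map] at this
  simp [arrowOver, this, eqToHom_map]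

end Diagonal

end IsDiscreteOpfib

theorem CategoryTheory.Functor.Initial.existsUnique_lift {A B E F : Type*} [Category A]
    [Category B] [Category E] [Category F] (u : A ⥤ B) [u.Initial] {p : E ⥤ F}
    (hp : IsDiscreteOpfib p) {t : A ⥤ E} {s : B ⥤ F} (w : u ⋙ s = t ⋙ p) : ∃! d : B ⥤ E, u ⋙ d = t ∧ d ⋙ p = s :=
  ⟨hp.diagonal w, ⟨hp.comp_diagonal w, hp.diagonal_comp w⟩,
    fun _ ⟨h₁, h₂⟩ => hp.eq_diagonal w h₁ h₂⟩

lemma CategoryTheory.CategoryOfElements.isDiscreteOpfib_π {B : Type*} [Category B]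
    (G : B ⥤ Type*) : IsDiscreteOpfib (CategoryOfElements.π G) := by
  rintro ⟨b, x⟩ b' f
  refine ⟨⟨⟨b', G.map f x⟩, ⟨f, rfl⟩⟩, ⟨rfl, Category.comp_id f⟩, ?_⟩
  rintro ⟨⟨b₂, x₂⟩, g⟩ ⟨h, hg⟩
  dsimp [CategoryOfElements.π] at h hg
  subst h
  simp only [eqToHom_refl, Category.comp_id] at hg
  obtain rfl : x₂ = G.map f x := by rw [← hg]; exact g.2.symm
  exact congrArg _ (Subtype.ext hg)

namespace CategoryTheory.Functor

variable {A B : Type u} [Category.{u} A] [Category.{u} B] (F : A ⥤ B)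

def costructuredArrowComponents : B ⥤ Type u :=
  CostructuredArrow.functor F ⋙ Cat.connectedComponents

lemma costructuredArrowComponents_map_mk {b b' : B} (k : b ⟶ b') (w : CostructuredArrow F b) :
    F.costructuredArrowComponents.map k (ConnectedComponents.mk w) =
      ConnectedComponents.mk ((CostructuredArrow.map k).obj w) :=
  rfl

lemma costructuredArrowComponents_map_mk_id {a : A} {b : B} (f : F.obj a ⟶ b) :
    F.costructuredArrowComponents.map f (ConnectedComponents.mk (CostructuredArrow.mk (𝟙 _))) =
      ConnectedComponents.mk (CostructuredArrow.mk f) := by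
  rw [costructuredArrowComponents_map_mk, CostructuredArrow.map_mk, Category.id_comp]

def toElementsOfComponents : A ⥤ F.costructuredArrowComponents.Elements where
  obj a := ⟨F.obj a, ConnectedComponents.mk (CostructuredArrow.mk (𝟙 (F.obj a)))⟩
  map {a a'} φ := ⟨F.map φ, _root_.Quotient.sound (Zigzag.of_hom
    (CostructuredArrow.homMk φ (by simp) :
      CostructuredArrow.mk (𝟙 (F.obj a) ≫ F.map φ) ⟶ CostructuredArrow.mk (𝟙 (F.obj a'))))⟩

lemma toElementsOfComponents_comp_π : F.toElementsOfComponents ⋙ CategoryOfElements.π _ = F :=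
  rfl

def componentToCostructuredArrow {b : B} (x : ConnectedComponents (CostructuredArrow F b)) :
    x.Component ⥤ CostructuredArrow F.toElementsOfComponents (elementsMk _ b x) where
  obj w := CostructuredArrow.mk (Y := w.obj.left)
    (⟨w.obj.hom, (F.costructuredArrowComponents_map_mk_id w.obj.hom).trans w.property⟩ :
      F.toElementsOfComponents.obj w.obj.left ⟶ elementsMk _ b x)
  map ψ := CostructuredArrow.homMk ψ.hom.left (Subtype.ext (CostructuredArrow.w ψ.hom))

lemma componentToCostructuredArrow_obj_surjective {b : B}
    (x : ConnectedComponents (CostructuredArrow F b)) :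
    Function.Surjective (F.componentToCostructuredArrow x).obj := by
  intro j
  have hj := (F.costructuredArrowComponents_map_mk_id (j.hom.val : F.obj j.left ⟶ b)).symm
  exact ⟨⟨CostructuredArrow.mk j.hom.val, hj.trans j.hom.2⟩, rfl⟩

instance initial_toElementsOfComponents : F.toElementsOfComponents.Initial where
  out z := by
    let x : ConnectedComponents (CostructuredArrow F z.1) := z.2
    exact isConnected_of_surjective_obj (F.componentToCostructuredArrow x)
      (F.componentToCostructuredArrow_obj_surjective x)

end CategoryTheory.Functor

namespace CategoryTheory.Cat

def initialFunctors : MorphismProperty Cat.{v, u} := fun _ _ F => F.toFunctor.Initial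

def discreteOpfibrations : MorphismProperty Cat.{v, u} :=
  fun _ _ F => IsDiscreteOpfib F.toFunctor

lemma hasUniqueLifts_initialFunctors_discreteOpfibrations :
    initialFunctors.{v, u}.HasUniqueLifts discreteOpfibrations := by
  intro A B E F i p (hi : i.toFunctor.Initial) hp t s w
  obtain ⟨d, ⟨h₁, h₂⟩, hd⟩ :=
    Functor.Initial.existsUnique_lift i.toFunctor hp (congrArg Hom.toFunctor w)
  exact ⟨d.toCatHom, ⟨Cat.ext h₁, Cat.ext h₂⟩, fun d' ⟨h₁', h₂'⟩ =>
    Cat.ext (hd _ ⟨congrArg Hom.toFunctor h₁', congrArg Hom.toFunctor h₂'⟩)⟩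

instance : initialFunctors.{u, u}.HasFactorization discreteOpfibrations where
  nonempty_mapFactorizationData F := ⟨{
    Z := Cat.of F.toFunctor.costructuredArrowComponents.Elements
    i := F.toFunctor.toElementsOfComponents.toCatHom
    p := (CategoryOfElements.π _).toCatHom
    fac := Cat.ext F.toFunctor.toElementsOfComponents_comp_π
    hi := F.toFunctor.initial_toElementsOfComponents
    hp := CategoryOfElements.isDiscreteOpfib_π _ }⟩

end CategoryTheory.Cat

/-- In the category of functors `C ⥤ Cat`, every natural transformation factors as one with
componentwise initial functors followed by one with componentwise discrete opfibrations, and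
componentwise-initial transformations are strictly left orthogonal to componentwise discrete
opfibrations. -/
theorem componentwise_comprehensive_factorization (C : Type u) [Category.{u} C] :
    (∀ (X Y : C ⥤ Cat.{u, u}) (α : X ⟶ Y),
      ∃ (Z : C ⥤ Cat.{u, u}) (β : X ⟶ Z) (γ : Z ⟶ Y),
        (∀ c : C, ((β.app c).toFunctor : ↑(X.obj c) ⥤ ↑(Z.obj c)).Initial) ∧
        (∀ c : C, IsDiscreteOpfib ((γ.app c).toFunctor : ↑(Z.obj c) ⥤ ↑(Y.obj c))) ∧
        β ≫ γ = α) ∧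
    (∀ (A B E F : C ⥤ Cat.{u, u}) (u : A ⟶ B) (p : E ⟶ F),
      (∀ c : C, ((u.app c).toFunctor : ↑(A.obj c) ⥤ ↑(B.obj c)).Initial) →
      (∀ c : C, IsDiscreteOpfib ((p.app c).toFunctor : ↑(E.obj c) ⥤ ↑(F.obj c))) →
      ∀ (t : A ⟶ E) (s : B ⟶ F), u ≫ s = t ≫ p →
        ∃! d : B ⟶ E, u ≫ d = t ∧ d ≫ p = s) := by
  have lifts := Cat.hasUniqueLifts_initialFunctors_discreteOpfibrations.{u, u}
  have := lifts.hasFunctorialFactorization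
  refine ⟨fun X Y α => ?_, lifts.functorCategory C⟩
  obtain ⟨Z, β, γ, fac, hβ, hγ⟩ := MorphismProperty.factorizationData
    (Cat.initialFunctors.functorCategory C) (Cat.discreteOpfibrations.functorCategory C) α
  exact ⟨Z, β, γ, hβ, hγ, fac⟩
end
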